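/- Let f⁺, f⁻ : {0,...,N} → ℝ be strictly positive and let U⁺, U⁻ : {0,...,N+1} → ℝ satisfy U⁺(0) = U⁻(0) = 0 and U⁺(k) + U⁻(N-k) = A for all k ∈ {0,...,N} and some constant A ∈ ℝ. Define f̃±(k) = f±(k) · e^{U±(k+1)}/e^{U±(k)}. Then the stationary distributions of the birth-death chains on {0,...,N} with rates (N-k)f⁺(k), k·f⁻(N-k) and with rates (N-k)f̃⁺(k), k·f̃⁻(N-k) coincide. -/

import Mathlib

/-!
Detailed balance determines a stationary distribution of a birth-death chain from its value at `0`
through the ratios `b k / d (k + 1)` of up- and down-rates, and normalisation fixes that value.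
The gauge constraint `U⁺(k) + U⁻(N - k) = A` makes the tilded up-rate from `k` and the tilded
down-rate from `k + 1` carry the same factor `exp (U⁺(k + 1) - U⁺(k))`, so these ratios are
unchanged.
-/

open Finset

section DetailedBalance

variable {K : Type*} [Field K] {N : ℕ} {b d r s : ℕ → K}

/-- `b k` is the rate from `k` to `k + 1` and `d k` the rate from `k` to `k - 1`. -/
def IsDetailedBalanced (N : ℕ) (b d r : ℕ → K) : Prop :=
  ∀ k < N, r (k + 1) * d (k + 1) = r k * b k

theorem IsDetailedBalanced.of_mul_rates {c : ℕ → K} (hc : ∀ k < N, c k ≠ 0)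
    (h : IsDetailedBalanced N (fun k => c k * b k) (fun k => c (k - 1) * d k) r) :
    IsDetailedBalanced N b d r := by
  intro k hk
  have hk' := h k hk
  simp only [Nat.add_sub_cancel] at hk'
  exact mul_left_cancel₀ (hc k hk) (by linear_combination hk')

theorem IsDetailedBalanced.eq_mul_prod (h : IsDetailedBalanced N b d r)
    (hd : ∀ k < N, d (k + 1) ≠ 0) :
    ∀ k ≤ N, r k = r 0 * ∏ i ∈ range k, b i / d (i + 1) := by
  intro k hk
  induction k with
  | zero => simp
  | succ k ih =>
    rw [prod_range_succ, ← mul_assoc, ← ih (by omega), ← mul_div_assoc, eq_div_iff (hd k hk),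
      h k hk]

theorem IsDetailedBalanced.eq_of_sum_eq_one (hr : IsDetailedBalanced N b d r)
    (hs : IsDetailedBalanced N b d s) (hd : ∀ k < N, d (k + 1) ≠ 0)
    (hr1 : ∑ k ∈ range (N + 1), r k = 1) (hs1 : ∑ k ∈ range (N + 1), s k = 1) :
    ∀ k ≤ N, r k = s k := by
  set C : ℕ → K := fun k => ∏ i ∈ range k, b i / d (i + 1)
  have sum_eq {t : ℕ → K} (ht : IsDetailedBalanced N b d t) :
      ∑ k ∈ range (N + 1), t k = t 0 * ∑ k ∈ range (N + 1), C k := by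
    rw [mul_sum]
    exact sum_congr rfl fun k hk => ht.eq_mul_prod hd k (Nat.lt_succ_iff.mp (mem_range.mp hk))
  rw [sum_eq hr] at hr1
  rw [sum_eq hs] at hs1
  have h0 : r 0 = s 0 :=
    mul_right_cancel₀ (right_ne_zero_of_mul_eq_one hr1) (hr1.trans hs1.symm)
  intro k hk
  rw [hr.eq_mul_prod hd k hk, hs.eq_mul_prod hd k hk, h0]

end DetailedBalance

theorem sub_eq_sub_of_add_eq_const {G : Type*} [AddCommGroup G] {N : ℕ} {Up Um : ℕ → G} {A : G}
    (hU : ∀ k ≤ N, Up k + Um (N - k) = A) {k : ℕ} (hk : k < N) :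
    Um (N - (k + 1) + 1) - Um (N - (k + 1)) = Up (k + 1) - Up k := by
  rw [show N - (k + 1) + 1 = N - k by omega, sub_eq_sub_iff_add_eq_add, add_comm, hU k hk.le,
    hU (k + 1) hk]

theorem stmt3_general (N : ℕ) (ν : ℝ) (hν : 0 < ν)
    (fp fm : ℕ → ℝ) (hfm : ∀ k ≤ N, 0 < fm k)
    (Up Um : ℕ → ℝ)
    (A : ℝ) (hU : ∀ k ≤ N, Up k + Um (N - k) = A)
    (fpt fmt : ℕ → ℝ)
    (hfpt : ∀ k, fpt k = fp k * Real.exp (Up (k + 1)) / Real.exp (Up k))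
    (hfmt : ∀ k, fmt k = fm k * Real.exp (Um (k + 1)) / Real.exp (Um k))
    (p q : ℕ → ℝ)
    (hpsum : ∑ k ∈ Finset.range (N + 1), p k = 1)
    (hqsum : ∑ k ∈ Finset.range (N + 1), q k = 1)
    (hpDB : ∀ k, 1 ≤ k → k ≤ N →
      p k * (ν * (k : ℝ) * fm (N - k)) = p (k - 1) * (ν * ((N : ℝ) - k + 1) * fp (k - 1)))
    (hqDB : ∀ k, 1 ≤ k → k ≤ N →
      q k * (ν * (k : ℝ) * fmt (N - k)) = q (k - 1) * (ν * ((N : ℝ) - k + 1) * fpt (k - 1))) :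
    ∀ k ≤ N, p k = q k := by
  set b : ℕ → ℝ := fun k => ν * ((N : ℝ) - k) * fp k
  set d : ℕ → ℝ := fun k => ν * k * fm (N - k)
  set g : ℕ → ℝ := fun k => Real.exp (Up (k + 1) - Up k)
  have hd : ∀ k < N, d (k + 1) ≠ 0 := fun k hk => by
    have := hfm (N - (k + 1)) (by omega)
    positivity
  have hfpt' (k : ℕ) : fpt k = g k * fp k := by
    rw [hfpt, mul_div_assoc, ← Real.exp_sub, mul_comm]
  have hfmt' (k : ℕ) (hk : k < N) : fmt (N - (k + 1)) = g k * fm (N - (k + 1)) := by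
    rw [hfmt, mul_div_assoc, ← Real.exp_sub, sub_eq_sub_of_add_eq_const hU hk, mul_comm]
  have hpDB' : IsDetailedBalanced N b d p := fun k hk => by
    have h := hpDB (k + 1) (by omega) (by omega)
    simp only [Nat.add_sub_cancel, Nat.cast_succ] at h
    simp only [b, d, Nat.cast_succ]
    linear_combination h
  have hqDB' : IsDetailedBalanced N b d q :=
    .of_mul_rates (c := g) (fun _ _ => (Real.exp_pos _).ne') fun k hk => by
      have h := hqDB (k + 1) (by omega) (by omega)
      simp only [Nat.add_sub_cancel, Nat.cast_succ, hfpt', hfmt' k hk] at h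
      simp only [b, d, Nat.add_sub_cancel, Nat.cast_succ]
      linear_combination h
  exact hpDB'.eq_of_sum_eq_one hqDB' hd hpsum hqsum

/-- The gauge freedom `U±` does not change the stationary
distribution of the birth-death chain. -/
theorem stmt3 (N : ℕ) (hN : 0 < N) (ν : ℝ) (hν : 0 < ν)
    (fp fm : ℕ → ℝ) (hfp : ∀ k ≤ N, 0 < fp k) (hfm : ∀ k ≤ N, 0 < fm k)
    (Up Um : ℕ → ℝ) (hUp0 : Up 0 = 0) (hUm0 : Um 0 = 0)
    (A : ℝ) (hU : ∀ k ≤ N, Up k + Um (N - k) = A)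
    (fpt fmt : ℕ → ℝ)
    (hfpt : ∀ k, fpt k = fp k * Real.exp (Up (k + 1)) / Real.exp (Up k))
    (hfmt : ∀ k, fmt k = fm k * Real.exp (Um (k + 1)) / Real.exp (Um k))
    (p q : ℕ → ℝ)
    (hp0 : ∀ k ≤ N, 0 ≤ p k) (hq0 : ∀ k ≤ N, 0 ≤ q k)
    (hpsum : ∑ k ∈ Finset.range (N + 1), p k = 1)
    (hqsum : ∑ k ∈ Finset.range (N + 1), q k = 1)
    (hpDB : ∀ k, 1 ≤ k → k ≤ N →
      p k * (ν * (k : ℝ) * fm (N - k)) = p (k - 1) * (ν * ((N : ℝ) - k + 1) * fp (k - 1)))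
    (hqDB : ∀ k, 1 ≤ k → k ≤ N →
      q k * (ν * (k : ℝ) * fmt (N - k)) = q (k - 1) * (ν * ((N : ℝ) - k + 1) * fpt (k - 1))) :
    ∀ k ≤ N, p k = q k :=
  stmt3_general N ν hν fp fm hfm Up Um A hU fpt fmt hfpt hfmt p q hpsum hqsum hpDB hqDB
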